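/- Let p be a prime and let ∂: H^i(Ω^⋆_{pn} ⊗ 𝔽_p) → H^{i+1}(Ω^⋆_{pn}) be the connecting (Bockstein) map from the exact sequence 0 → Ω^⋆_{pn} →^p Ω^⋆_{pn} → Ω^⋆_{pn}⊗𝔽_p → 0. Then for ω ∈ Ω^i_n a form with mod-p reduction ω̄, the mod-p reduction of ∂(C^{-1}(ω̄)) equals C^{-1}(d ω̄). In other words, the first Bockstein differential d₁ = (reduction mod p)∘∂ corresponds, under the Cartier isomorphism, to the de Rham differential of the complex over 𝔽_p. -/
import Mathlib


open MvPolynomial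

/-- A differential form on the affine `m`-space over `R`: a family of polynomial
coefficients indexed by the subsets `s` of the variables (the coefficient of `dx_s`). -/
abbrev Omega (m : ℕ) (R : Type) [CommRing R] : Type :=
  Finset (Fin m) → MvPolynomial (Fin m) R

/-- The de Rham differential. -/
noncomputable def dRham (m : ℕ) (R : Type) [CommRing R] : Omega m R →ₗ[R] Omega m R where
  toFun ω s := ∑ j ∈ s, (-1 : MvPolynomial (Fin m) R) ^ ((s.filter (· < j)).card) *
      pderiv j (ω (s.erase j))
  map_add' ω η := by
    funext s
    simp [Finset.sum_add_distrib, mul_add]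
  map_smul' c ω := by
    funext s
    simp [Finset.smul_sum, mul_smul_comm]

/-- The Koszul contraction: the `R[x]`-linear antiderivation with `κ (dx_j) = x_j`. -/
noncomputable def koszul (m : ℕ) (R : Type) [CommRing R] : Omega m R →ₗ[R] Omega m R where
  toFun ω s := ∑ j ∈ sᶜ, (-1 : MvPolynomial (Fin m) R) ^ ((s.filter (· < j)).card) *
      (X j * ω (insert j s))
  map_add' ω η := by
    funext s
    simp [Finset.sum_add_distrib, mul_add]
  map_smul' c ω := by
    funext s
    simp [Finset.smul_sum, mul_smul_comm]

/-- Forms of cohomological degree `i` and total degree `n`: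
supported on `i`-element subsets, with homogeneous coefficients of degree `n - i`
(and `0` if `i > n`): this is `Sⁿ⁻ⁱ ⊗ Λⁱ`. -/
noncomputable def homog (m n i : ℕ) (R : Type) [CommRing R] : Submodule R (Omega m R) :=
  Submodule.pi Set.univ fun s : Finset (Fin m) =>
    if s.card = i ∧ i ≤ n then homogeneousSubmodule (Fin m) R (n - i) else ⊥

/-- de Rham cocycles of cohomological degree `i`, total degree `n`. -/
noncomputable def cocycles (m n i : ℕ) (R : Type) [CommRing R] : Submodule R (Omega m R) :=
  homog m n i R ⊓ LinearMap.ker (dRham m R)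

/-- de Rham coboundaries of cohomological degree `i`, total degree `n`. -/
noncomputable def cobdry (m n i : ℕ) (R : Type) [CommRing R] : Submodule R (Omega m R) :=
  match i with
  | 0 => ⊥
  | i + 1 => (homog m n i R).map (dRham m R)

/-- The de Rham cohomology `Hⁱ(Ω⋆_n)` in cohomological degree `i` and total degree `n`. -/
abbrev DRH (m n i : ℕ) (R : Type) [CommRing R] : Type :=
  cocycles m n i R ⧸ ((cobdry m n i R).comap (cocycles m n i R).subtype)

/-- The Frobenius `x_j ↦ x_jᵖ`, `dx_j ↦ p x_jᵖ⁻¹ dx_j`. -/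
noncomputable def frob (m p : ℕ) (R : Type) [CommRing R] : Omega m R →ₗ[R] Omega m R where
  toFun ω s := (∏ j ∈ s, ((p : MvPolynomial (Fin m) R) * X j ^ (p - 1))) *
      bind₁ (fun j => (X j : MvPolynomial (Fin m) R) ^ p) (ω s)
  map_add' ω η := by
    funext s
    simp [mul_add]
  map_smul' c ω := by
    funext s
    simp [mul_smul_comm]

/-- The inverse Cartier operator `x_j ↦ x_jᵖ`, `dx_j ↦ x_jᵖ⁻¹ dx_j` mod `p`. -/
noncomputable def cartierInv (m p : ℕ) : Omega m (ZMod p) →ₗ[ZMod p] Omega m (ZMod p) where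
  toFun ω s := (∏ j ∈ s, (X j : MvPolynomial (Fin m) (ZMod p)) ^ (p - 1)) *
      bind₁ (fun j => (X j : MvPolynomial (Fin m) (ZMod p)) ^ p) (ω s)
  map_add' ω η := by
    funext s
    simp [mul_add]
  map_smul' c ω := by
    funext s
    simp [mul_smul_comm]

/-- Reduction of integral forms modulo `p`. -/
noncomputable def redp (m p : ℕ) (ω : Omega m ℤ) : Omega m (ZMod p) :=
  fun s => MvPolynomial.map (Int.castRingHom (ZMod p)) (ω s)

/-- The `p`-primary component of an abelian group. -/
def pPrim (p : ℕ) (M : Type*) [AddCommGroup M] : AddSubgroup M where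
  carrier := {x | ∃ k : ℕ, p ^ k • x = 0}
  zero_mem' := ⟨0, by simp⟩
  add_mem' := by
    rintro a b ⟨k, hk⟩ ⟨l, hl⟩
    refine ⟨k + l, ?_⟩
    have ha : p ^ (k + l) • a = 0 := by rw [pow_add, mul_comm, mul_smul, hk, smul_zero]
    have hb : p ^ (k + l) • b = 0 := by rw [pow_add, mul_smul, hl, smul_zero]
    rw [smul_add, ha, hb, add_zero]
  neg_mem' := by
    rintro a ⟨k, hk⟩
    exact ⟨k, by rw [smul_neg, hk, neg_zero]⟩


lemma pderiv_bind₁_pow {R : Type} [CommRing R] {m p : ℕ} (j : Fin m)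
    (f : MvPolynomial (Fin m) R) :
    pderiv j (bind₁ (fun k => (X k : MvPolynomial (Fin m) R) ^ p) f)
      = (p : MvPolynomial (Fin m) R) * X j ^ (p - 1)
          * bind₁ (fun k => (X k : MvPolynomial (Fin m) R) ^ p) (pderiv j f) := by
  induction f using MvPolynomial.induction_on with
  | C a => simp
  | add f g hf hg => simp [hf, hg, mul_add]
  | mul_X f k hf =>
    simp only [pderiv_mul, map_mul, map_add, bind₁_X_right, hf, pderiv_pow]
    rcases eq_or_ne j k with rfl | hjk
    · simp; ring
    · rw [pderiv_X_of_ne (Ne.symm hjk)]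
      simp [mul_assoc]

lemma pderiv_prod_eq_zero {R : Type} [CommRing R] {m p : ℕ} {j : Fin m} {t : Finset (Fin m)}
    (hj : j ∉ t) :
    pderiv j (∏ k ∈ t, ((p : MvPolynomial (Fin m) R) * X k ^ (p - 1))) = 0 := by
  classical
  induction t using Finset.induction_on with
  | empty => simp
  | @insert a tt hx ih =>
    rw [Finset.prod_insert hx, pderiv_mul, ih (fun h => hj (Finset.mem_insert_of_mem h))]
    have hja : a ≠ j := fun h => hj (h ▸ Finset.mem_insert_self a tt)
    simp [pderiv_pow, pderiv_X_of_ne hja]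

lemma dRham_apply (m : ℕ) (R : Type) [CommRing R] (ω : Omega m R) (s : Finset (Fin m)) :
    dRham m R ω s = ∑ j ∈ s, (-1 : MvPolynomial (Fin m) R) ^ ((s.filter (· < j)).card) *
      pderiv j (ω (s.erase j)) := rfl

lemma frob_apply (m p : ℕ) (R : Type) [CommRing R] (ω : Omega m R) (s : Finset (Fin m)) :
    frob m p R ω s = (∏ j ∈ s, ((p : MvPolynomial (Fin m) R) * X j ^ (p - 1))) *
      bind₁ (fun j => (X j : MvPolynomial (Fin m) R) ^ p) (ω s) := rfl

lemma dRham_frob (m p : ℕ) (ω : Omega m ℤ) (s : Finset (Fin m)) :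
    dRham m ℤ (frob m p ℤ ω) s
      = (p : MvPolynomial (Fin m) ℤ) ^ s.card * (∏ k ∈ s, X k ^ (p - 1))
          * bind₁ (fun k => (X k : MvPolynomial (Fin m) ℤ) ^ p) (dRham m ℤ ω s) := by
  classical
  rw [dRham_apply]
  have key : ∀ j ∈ s,
      (-1 : MvPolynomial (Fin m) ℤ) ^ ((s.filter (· < j)).card) *
        pderiv j (frob m p ℤ ω (s.erase j))
      = (∏ k ∈ s, ((p : MvPolynomial (Fin m) ℤ) * X k ^ (p - 1))) *
          ((-1 : MvPolynomial (Fin m) ℤ) ^ ((s.filter (· < j)).card) *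
            bind₁ (fun k => (X k : MvPolynomial (Fin m) ℤ) ^ p) (pderiv j (ω (s.erase j)))) := by
    intro j hj
    rw [frob_apply, pderiv_mul, pderiv_prod_eq_zero (Finset.notMem_erase j s), zero_mul, zero_add,
      pderiv_bind₁_pow]
    have : (∏ k ∈ s.erase j, ((p : MvPolynomial (Fin m) ℤ) * X k ^ (p - 1))) *
        ((p : MvPolynomial (Fin m) ℤ) * X j ^ (p - 1))
        = ∏ k ∈ s, ((p : MvPolynomial (Fin m) ℤ) * X k ^ (p - 1)) :=
      Finset.prod_erase_mul s _ hj
    rw [← this]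
    ring
  rw [Finset.sum_congr rfl key, ← Finset.mul_sum]
  have hprod : (∏ k ∈ s, ((p : MvPolynomial (Fin m) ℤ) * X k ^ (p - 1)))
      = (p : MvPolynomial (Fin m) ℤ) ^ s.card * ∏ k ∈ s, X k ^ (p - 1) := by
    rw [Finset.prod_mul_distrib, Finset.prod_const]
  rw [hprod, dRham_apply, mul_assoc, mul_assoc]
  congr 2
  rw [map_sum]
  refine Finset.sum_congr rfl fun j hj => ?_
  rw [map_mul, map_pow]
  simp


lemma homog_support {m n i : ℕ} {ω : Omega m ℤ} (hω : ω ∈ homog m n i ℤ)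
    {s : Finset (Fin m)} (hs : ¬(s.card = i ∧ i ≤ n)) : ω s = 0 := by
  have h := hω s (Set.mem_univ s)
  dsimp only at h
  rw [if_neg hs] at h
  simpa using h

lemma dRham_support {m n i : ℕ} {ω : Omega m ℤ} (hω : ω ∈ homog m n i ℤ)
    {s : Finset (Fin m)} (hs : s.card ≠ i + 1) : dRham m ℤ ω s = 0 := by
  rw [dRham_apply]
  refine Finset.sum_eq_zero fun j hj => ?_
  have : ω (s.erase j) = 0 := by
    refine homog_support hω fun h => hs ?_
    obtain ⟨h1, h2⟩ := h
    have hce := Finset.card_erase_of_mem hj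
    have hpos : 0 < s.card := Finset.card_pos.mpr ⟨j, hj⟩
    omega
  rw [this]
  simp

/-- for `ω ∈ Ωⁱ_n` over `ℤ`, the Bockstein `∂ C⁻¹(ω̄)` is represented by
`d F(ω) / p^(i+1)`, and its mod-`p` reduction is `C⁻¹(d ω̄)`: the first Bockstein
differential corresponds to the de Rham differential under the Cartier isomorphism. -/
theorem bockstein_d1_is_deRham (m n i p : ℕ) (hp : p.Prime)
    (ω : Omega m ℤ) (hω : ω ∈ homog m n i ℤ)
    (ζ : Omega m ℤ) (hζ : ((p : ℤ) ^ (i + 1)) • ζ = dRham m ℤ (frob m p ℤ ω)) :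
    redp m p ζ = cartierInv m p (redp m p (dRham m ℤ ω)) := by
  classical
  funext s
  have hpM : ((p : MvPolynomial (Fin m) ℤ)) ^ (i + 1) ≠ 0 := by
    apply pow_ne_zero
    exact Nat.cast_ne_zero.mpr hp.ne_zero
  have hζs : ((p : ℤ) ^ (i + 1)) • ζ s = dRham m ℤ (frob m p ℤ ω) s := by
    rw [← hζ]; rfl
  rw [dRham_frob] at hζs
  have hsmul : ((p : ℤ) ^ (i + 1)) • ζ s
      = (p : MvPolynomial (Fin m) ℤ) ^ (i + 1) * ζ s := by
    rw [zsmul_eq_mul]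
    push_cast
    ring
  have hζval : ζ s = (∏ k ∈ s, (X k : MvPolynomial (Fin m) ℤ) ^ (p - 1))
      * bind₁ (fun k => (X k : MvPolynomial (Fin m) ℤ) ^ p) (dRham m ℤ ω s) := by
    by_cases hsc : s.card = i + 1
    · apply mul_left_cancel₀ hpM
      rw [← hsmul, hζs, hsc, mul_assoc]
    · have hzero : dRham m ℤ ω s = 0 := dRham_support hω hsc
      rw [hzero]
      apply mul_left_cancel₀ hpM
      rw [← hsmul, hζs, hzero]
      simp
  show MvPolynomial.map (Int.castRingHom (ZMod p)) (ζ s) = _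
  rw [hζval, map_mul, map_prod]
  have hbind : MvPolynomial.map (Int.castRingHom (ZMod p))
      (bind₁ (fun k => (X k : MvPolynomial (Fin m) ℤ) ^ p) (dRham m ℤ ω s))
      = bind₁ (fun k => (X k : MvPolynomial (Fin m) (ZMod p)) ^ p)
          (MvPolynomial.map (Int.castRingHom (ZMod p)) (dRham m ℤ ω s)) := by
    rw [map_bind₁]
    simp
  rw [hbind]
  simp only [map_pow, map_X]
  rfl
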